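/- For any graph G with no isolated vertex, Δ(G) - 1 ≤ ∂_{2p}(G) ≤ (Δ(G) - 1)·(n(G) - i(G))/Δ(G), where i(G) is the independent domination number. -/

import Mathlib

open Finset

variable {V : Type*}

/-- `S` is a 2-packing: closed neighbourhoods of distinct vertices of `S` are disjoint. -/
def IsPacking2 (G : SimpleGraph V) (S : Finset V) : Prop :=
  (S : Set V).Pairwise fun u v =>
    Disjoint (G.neighborSet u ∪ {u}) (G.neighborSet v ∪ {v})

/-- The external neighbourhood of `S`: vertices outside `S` with a neighbour in `S`. -/
def extN (G : SimpleGraph V) [Fintype V] [DecidableEq V] [DecidableRel G.Adj]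
    (S : Finset V) : Finset V :=
  Finset.univ.filter fun v => v ∉ S ∧ ∃ u ∈ S, G.Adj u v

/-- The differential of a set `S`: `|N_e(S)| - |S|`. -/
def diffSet (G : SimpleGraph V) [Fintype V] [DecidableEq V] [DecidableRel G.Adj]
    (S : Finset V) : ℤ :=
  ((extN G S).card : ℤ) - S.card

/-- The 2-packing differential of `G`. -/
noncomputable def pdiff2 (G : SimpleGraph V) [Fintype V] [DecidableEq V]
    [DecidableRel G.Adj] : ℤ :=
  sSup {d : ℤ | ∃ S : Finset V, IsPacking2 G S ∧ d = diffSet G S}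

/-- The packing number of `G`: maximum cardinality of a 2-packing. -/
noncomputable def packNum (G : SimpleGraph V) [Fintype V] : ℕ :=
  sSup {n : ℕ | ∃ S : Finset V, IsPacking2 G S ∧ n = S.card}

/-- `G` has no isolated vertex. -/
def NoIsolated (G : SimpleGraph V) : Prop := ∀ v : V, ∃ u, G.Adj v u

/-- `S` is a dominating set of `G`. -/
def IsDom (G : SimpleGraph V) (S : Finset V) : Prop :=
  ∀ v, v ∉ S → ∃ u ∈ S, G.Adj u v

/-- The independent domination number of `G`. -/
noncomputable def indepDomNum (G : SimpleGraph V) [Fintype V] : ℕ :=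
  sInf {n : ℕ | ∃ S : Finset V,
    (∀ u ∈ S, ∀ v ∈ S, ¬ G.Adj u v) ∧ IsDom G S ∧ n = S.card}

/-!
A single vertex of maximum degree is a 2-packing with differential `Δ - 1`.
Conversely, let `S` be a 2-packing realising `∂₂ₚ(G)`. Since `|N_e(S)| ≤ Δ |S|`, we get
`Δ (|N_e(S)| - |S|) ≤ (Δ - 1) |N_e(S)|`. A 2-packing is independent, so it extends to an
independent dominating set `I`, which misses `N_e(S)`; hence `i(G) + |N_e(S)| ≤ |I ∪ N_e(S)| ≤ n`.
-/

namespace SimpleGraph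

variable {G : SimpleGraph V}

lemma isPacking2_empty : IsPacking2 G ∅ := by
  simp [IsPacking2]

lemma isPacking2_singleton (v : V) : IsPacking2 G {v} := by
  simp [IsPacking2]

lemma IsPacking2.not_adj {S : Finset V} (hS : IsPacking2 G S) :
    ∀ u ∈ S, ∀ v ∈ S, ¬ G.Adj u v := by
  intro u hu v hv hadj
  obtain rfl | hne := eq_or_ne u v
  · exact G.irrefl hadj
  · exact Set.disjoint_left.mp (hS hu hv hne) (Or.inl hadj) (Or.inr rfl)

/-- An inclusion-maximal independent set is dominating. -/
lemma exists_indep_isDom_superset [Finite V] {S : Finset V}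
    (hS : ∀ u ∈ S, ∀ v ∈ S, ¬ G.Adj u v) :
    ∃ I : Finset V, S ⊆ I ∧ (∀ u ∈ I, ∀ v ∈ I, ¬ G.Adj u v) ∧ IsDom G I := by
  classical
  obtain ⟨I, hSI, hmax⟩ :=
    Finite.exists_le_maximal (p := fun I : Finset V => ∀ u ∈ I, ∀ v ∈ I, ¬ G.Adj u v) hS
  refine ⟨I, hSI, hmax.prop, fun v hv => ?_⟩
  by_contra! hfar
  have hindep : ∀ a ∈ insert v I, ∀ b ∈ insert v I, ¬ G.Adj a b := by
    simp only [mem_insert]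
    rintro a (rfl | ha) b (rfl | hb) hab
    exacts [G.irrefl hab, hfar b hb hab.symm, hfar a ha hab, hmax.prop a ha b hb hab]
  exact hv (hmax.eq_of_le hindep (subset_insert v I) ▸ mem_insert_self v I)

variable [Fintype V] [DecidableEq V] [DecidableRel G.Adj]

lemma mem_extN {S : Finset V} {v : V} : v ∈ extN G S ↔ v ∉ S ∧ ∃ u ∈ S, G.Adj u v := by
  simp [extN]

lemma extN_singleton (v : V) : extN G {v} = G.neighborFinset v := by
  ext w
  simp only [mem_extN, mem_singleton, exists_eq_left, mem_neighborFinset]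
  exact ⟨And.right, fun hvw => ⟨hvw.ne.symm, hvw⟩⟩

lemma diffSet_empty : diffSet G ∅ = 0 := by
  simp [diffSet, extN]

lemma diffSet_singleton (v : V) : diffSet G {v} = G.degree v - 1 := by
  simp [diffSet, extN_singleton]

lemma card_extN_le_maxDegree_mul (S : Finset V) : #(extN G S) ≤ G.maxDegree * #S :=
  calc #(extN G S)
      ≤ #(S.biUnion fun u => G.neighborFinset u) := card_le_card fun w hw => by
        obtain ⟨-, u, hu, huw⟩ := mem_extN.mp hw
        exact mem_biUnion.mpr ⟨u, hu, (G.mem_neighborFinset u w).mpr huw⟩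
    _ ≤ ∑ u ∈ S, G.degree u := card_biUnion_le
    _ ≤ ∑ _u ∈ S, G.maxDegree := sum_le_sum fun u _ => G.degree_le_maxDegree u
    _ = G.maxDegree * #S := by rw [sum_const, smul_eq_mul, mul_comm]

lemma indepDomNum_add_card_extN_le {S : Finset V} (hS : ∀ u ∈ S, ∀ v ∈ S, ¬ G.Adj u v) :
    indepDomNum G + #(extN G S) ≤ Fintype.card V := by
  obtain ⟨I, hSI, hI, hIdom⟩ := exists_indep_isDom_superset hS
  have hdisj : Disjoint I (extN G S) := Finset.disjoint_left.mpr fun w hwI hwE => by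
    obtain ⟨-, u, hu, huw⟩ := mem_extN.mp hwE
    exact hI u (hSI hu) w hwI huw
  calc indepDomNum G + #(extN G S)
      ≤ #I + #(extN G S) := by gcongr; exact Nat.sInf_le ⟨I, hI, hIdom, rfl⟩
    _ = #(I ∪ extN G S) := (card_union_of_disjoint hdisj).symm
    _ ≤ Fintype.card V := card_le_univ _

-- For `Δ = 0` the right-hand side is `0` because `x / 0 = 0` in `ℚ`.
lemma diffSet_le_of_indep {S : Finset V} (hS : ∀ u ∈ S, ∀ v ∈ S, ¬ G.Adj u v) :
    (diffSet G S : ℚ) ≤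
      ((G.maxDegree : ℚ) - 1) * ((Fintype.card V : ℚ) - indepDomNum G) / G.maxDegree := by
  have hext : (#(extN G S) : ℚ) ≤ G.maxDegree * #S := by
    exact_mod_cast card_extN_le_maxDegree_mul S
  have hdom : (indepDomNum G : ℚ) + #(extN G S) ≤ Fintype.card V := by
    exact_mod_cast indepDomNum_add_card_extN_le hS
  rw [diffSet, Int.cast_sub, Int.cast_natCast, Int.cast_natCast]
  obtain hΔ | hΔ := Nat.eq_zero_or_pos G.maxDegree
  · rw [hΔ, Nat.cast_zero, div_zero]
    rw [hΔ, Nat.cast_zero, zero_mul] at hext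
    linarith
  · have hΔ' : (1 : ℚ) ≤ G.maxDegree := by exact_mod_cast hΔ
    rw [le_div_iff₀ (by linarith)]
    nlinarith

lemma bddAbove_diffSet_isPacking2 :
    BddAbove {d : ℤ | ∃ S : Finset V, IsPacking2 G S ∧ d = diffSet G S} := by
  refine ⟨Fintype.card V, ?_⟩
  rintro d ⟨S, -, rfl⟩
  have := card_le_univ (extN G S)
  simp only [diffSet]
  omega

lemma diffSet_le_pdiff2 {S : Finset V} (hS : IsPacking2 G S) : diffSet G S ≤ pdiff2 G :=
  le_csSup bddAbove_diffSet_isPacking2 ⟨S, hS, rfl⟩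

lemma exists_isPacking2_diffSet_eq_pdiff2 :
    ∃ S : Finset V, IsPacking2 G S ∧ diffSet G S = pdiff2 G := by
  have hne : {d : ℤ | ∃ S : Finset V, IsPacking2 G S ∧ d = diffSet G S}.Nonempty :=
    ⟨_, ∅, isPacking2_empty, rfl⟩
  obtain ⟨S, hS, hd⟩ := Int.csSup_mem hne bddAbove_diffSet_isPacking2
  exact ⟨S, hS, hd.symm⟩

lemma maxDegree_sub_one_le_pdiff2 : (G.maxDegree : ℤ) - 1 ≤ pdiff2 G := by
  cases isEmpty_or_nonempty V
  · have := diffSet_le_pdiff2 (isPacking2_empty (G := G))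
    rw [diffSet_empty] at this
    rw [maxDegree_of_subsingleton]
    omega
  · obtain ⟨v, hv⟩ := G.exists_maximal_degree_vertex
    rw [hv, ← diffSet_singleton]
    exact diffSet_le_pdiff2 (isPacking2_singleton v)

end SimpleGraph

open SimpleGraph in
theorem stmt11_general {V : Type*} [Fintype V] [DecidableEq V] (G : SimpleGraph V)
    [DecidableRel G.Adj] :
    (G.maxDegree : ℤ) - 1 ≤ pdiff2 G ∧
      (pdiff2 G : ℚ) ≤ ((G.maxDegree : ℚ) - 1)
        * ((Fintype.card V : ℚ) - indepDomNum G) / (G.maxDegree : ℚ) := by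
  obtain ⟨S, hS, hpdiff⟩ := exists_isPacking2_diffSet_eq_pdiff2 (G := G)
  exact ⟨maxDegree_sub_one_le_pdiff2, hpdiff ▸ diffSet_le_of_indep hS.not_adj⟩

theorem stmt11 {V : Type*} [Fintype V] [DecidableEq V] (G : SimpleGraph V)
    [DecidableRel G.Adj] (h : NoIsolated G) :
    (G.maxDegree : ℤ) - 1 ≤ pdiff2 G ∧
      (pdiff2 G : ℚ) ≤ ((G.maxDegree : ℚ) - 1)
        * ((Fintype.card V : ℚ) - indepDomNum G) / (G.maxDegree : ℚ) :=
  stmt11_general G
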